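/- arXiv:1612.02407 — 7 statements merged into one kernel-verified Lean document; each statement's English description precedes it below -/
import Mathlib

section
/- Let Y be a symmetric real random variable with all moments finite and let l ≥ 1 be an integer. Then E|1+Y|^{2l} ≥ 1 + Σ_{r=1}^{l} ((l/r)·‖Y‖_{2r})^{2r}, where ‖Y‖_q = (E|Y|^q)^{1/q}. -/
/-!
Expanding `(1 + Y)^{2l}` binomially, the odd moments of the symmetric `Y` vanish, so
`E|1+Y|^{2l} = ∑_{r ≤ l} C(2l, 2r) E|Y|^{2r}`, a sum of nonnegative terms. The bound then holds
termwise by `C(n, k) ≥ (n/k)^k` at `n = 2l`, `k = 2r`, since `(2l/2r)^{2r} ‖Y‖_{2r}^{2r}` is the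
`r`-th term of the claimed sum.
-/

open MeasureTheory ProbabilityTheory Finset

theorem Nat.pow_le_pow_mul_choose {n k : ℕ} (hkn : k ≤ n) : n ^ k ≤ k ^ k * n.choose k := by
  -- factorwise comparison of `n ^ k * k! = ∏ n (k - i)` with `k ^ k * n.descFactorial k`
  have hprod : ∏ i ∈ range k, n * (k - i) ≤ ∏ i ∈ range k, k * (n - i) :=
    prod_le_prod' fun i _ => by
      rw [Nat.mul_sub, Nat.mul_sub, Nat.mul_comm n k]
      exact Nat.sub_le_sub_left (Nat.mul_le_mul_right _ hkn) _
  rw [prod_mul_distrib, prod_mul_distrib, prod_const, prod_const, card_range,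
    ← descFactorial_eq_prod_range, ← descFactorial_eq_prod_range, descFactorial_self,
    descFactorial_eq_factorial_mul_choose, Nat.mul_left_comm] at hprod
  exact Nat.le_of_mul_le_mul_right (by linarith) k.factorial_pos

theorem Nat.div_pow_le_choose {α : Type*} [Semifield α] [LinearOrder α] [IsStrictOrderedRing α]
    {n k : ℕ} (hkn : k ≤ n) : ((n : α) / k) ^ k ≤ n.choose k := by
  rcases k.eq_zero_or_pos with rfl | hk
  · simp
  rw [div_pow, div_le_iff₀ (by positivity), mul_comm]
  exact_mod_cast Nat.pow_le_pow_mul_choose hkn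

theorem Finset.sum_range_two_mul_add_one_eq_sum_even {M : Type*} [AddCommMonoid M] (f : ℕ → M)
    (hf : ∀ k, Odd k → f k = 0) (l : ℕ) :
    ∑ k ∈ range (2 * l + 1), f k = ∑ r ∈ range (l + 1), f (2 * r) := by
  induction l with
  | zero => simp
  | succ l ih =>
    rw [show 2 * (l + 1) + 1 = 2 * l + 1 + 1 + 1 by ring, sum_range_succ, sum_range_succ, ih,
      hf _ (odd_two_mul_add_one l), add_zero, sum_range_succ _ (l + 1)]
    rfl

theorem mul_rpow_one_div_pow {a x : ℝ} (hx : 0 ≤ x) {n : ℕ} (hn : n ≠ 0) :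
    (a * x ^ ((1 : ℝ) / n)) ^ n = a ^ n * x := by
  rw [mul_pow, one_div, Real.rpow_inv_natCast_pow hx hn]

section Moments

variable {Ω : Type*} [MeasurableSpace Ω] {μ : Measure Ω} {Y : Ω → ℝ}

theorem integrable_pow_of_integrable_abs_pow (hY : AEStronglyMeasurable Y μ) {n : ℕ}
    (h : Integrable (fun ω => |Y ω| ^ n) μ) : Integrable (fun ω => Y ω ^ n) μ :=
  h.mono' (hY.pow n) (ae_of_all _ fun ω => by simp)

theorem integral_one_add_pow (hint : ∀ k, Integrable (fun ω => Y ω ^ k) μ) (n : ℕ) :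
    ∫ ω, (1 + Y ω) ^ n ∂μ = ∑ k ∈ range (n + 1), (n.choose k : ℝ) * ∫ ω, Y ω ^ k ∂μ := by
  simp_rw [add_comm (1 : ℝ), add_pow, one_pow, mul_one]
  rw [integral_finsetSum _ fun k _ => (hint k).mul_const _]
  exact sum_congr rfl fun k _ => by rw [integral_mul_const, mul_comm]

theorem integral_pow_eq_zero_of_identDistrib_neg (hsymm : IdentDistrib Y (fun ω => -Y ω) μ μ)
    {k : ℕ} (hk : Odd k) : ∫ ω, Y ω ^ k ∂μ = 0 := by
  have h := (hsymm.comp (measurable_id.pow_const k)).integral_eq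
  simp only [Function.comp_def, id, hk.neg_pow, integral_neg] at h
  linarith

theorem integral_abs_one_add_pow_two_mul (hsymm : IdentDistrib Y (fun ω => -Y ω) μ μ)
    (hmom : ∀ n : ℕ, Integrable (fun ω => |Y ω| ^ n) μ) (l : ℕ) :
    ∫ ω, |1 + Y ω| ^ (2 * l) ∂μ
      = ∑ r ∈ range (l + 1), ((2 * l).choose (2 * r) : ℝ) * ∫ ω, |Y ω| ^ (2 * r) ∂μ := by
  have hint k := integrable_pow_of_integrable_abs_pow hsymm.aemeasurable_fst.aestronglyMeasurable
    (hmom k)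
  simp_rw [(even_two_mul _).pow_abs]
  rw [integral_one_add_pow hint, sum_range_two_mul_add_one_eq_sum_even]
  intro k hk
  rw [integral_pow_eq_zero_of_identDistrib_neg hsymm hk, mul_zero]

end Moments

theorem stmt1_general {Ω : Type*} [MeasureSpace Ω] [IsProbabilityMeasure (ℙ : Measure Ω)]
    (Y : Ω → ℝ)
    (hsymm : IdentDistrib Y (fun ω => -Y ω))
    (hmom : ∀ n : ℕ, Integrable (fun ω => |Y ω| ^ n))
    (l : ℕ) :
    1 + ∑ r ∈ Finset.Icc 1 l,
        ((l / r : ℝ) * (∫ ω, |Y ω| ^ (2 * r)) ^ ((1 : ℝ) / (2 * r))) ^ (2 * r)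
      ≤ ∫ ω, |1 + Y ω| ^ (2 * l) := by
  rw [integral_abs_one_add_pow_two_mul hsymm hmom, Nat.range_succ_eq_Icc_zero,
    ← insert_Icc_add_one_left_eq_Icc l.zero_le, sum_insert (by simp)]
  simp only [mul_zero, Nat.choose_zero_right, pow_zero, integral_const, probReal_univ,
    smul_eq_mul, Nat.cast_one, mul_one, zero_add]
  gcongr with r hr
  obtain ⟨hr1, hrl⟩ := mem_Icc.mp hr
  have hr : 2 * r ≠ 0 := by omega
  have hmom_nonneg : 0 ≤ ∫ ω, |Y ω| ^ (2 * r) := integral_nonneg fun ω => by positivity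
  calc ((l / r : ℝ) * (∫ ω, |Y ω| ^ (2 * r)) ^ ((1 : ℝ) / (2 * r))) ^ (2 * r)
      = ((2 * l : ℕ) / (2 * r : ℕ) : ℝ) ^ (2 * r) * ∫ ω, |Y ω| ^ (2 * r) := by
        rw [← mul_rpow_one_div_pow hmom_nonneg hr]
        push_cast
        rw [mul_div_mul_left _ _ two_ne_zero]
    _ ≤ ((2 * l).choose (2 * r) : ℝ) * ∫ ω, |Y ω| ^ (2 * r) := by
        gcongr
        exact Nat.div_pow_le_choose (by omega)

/-- If `Y` is symmetric with all moments finite and `l ≥ 1`, then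
`E|1+Y|^{2l} ≥ 1 + ∑_{r=1}^{l} ((l/r)·‖Y‖_{2r})^{2r}`. -/
theorem stmt1 {Ω : Type*} [MeasureSpace Ω] [IsProbabilityMeasure (ℙ : Measure Ω)]
    (Y : Ω → ℝ) (hY : Measurable Y)
    (hsymm : IdentDistrib Y (fun ω => -Y ω))
    (hmom : ∀ n : ℕ, Integrable (fun ω => |Y ω| ^ n))
    (l : ℕ) (hl : 1 ≤ l) :
    1 + ∑ r ∈ Finset.Icc 1 l,
        ((l / r : ℝ) * (∫ ω, |Y ω| ^ (2 * r)) ^ ((1 : ℝ) / (2 * r))) ^ (2 * r)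
      ≤ ∫ ω, |1 + Y ω| ^ (2 * l) :=
  stmt1_general Y hsymm hmom l
end

section
/- Let X be a real random variable such that ‖X‖_{2p} ≤ α·‖X‖_p for every p ≥ 2, where α ≥ 1. Then for all q ≥ p ≥ 2, ‖X‖_q ≤ α·(q/p)^{log₂ α}·‖X‖_p. -/
open MeasureTheory ProbabilityTheory

/-! Iterating the doubling hypothesis `n = ⌈log₂ (q/p)⌉` times gives `‖X‖_{2ⁿp} ≤ αⁿ ‖X‖_p`, and
`‖X‖_q ≤ ‖X‖_{2ⁿp}` because `q ≤ 2ⁿp` and `L^r` norms on a probability space increase with `r`.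
Finally `αⁿ ≤ α · α^{log₂ (q/p)} = α (q/p)^{log₂ α}`. -/

namespace Real

lemma rpow_logb_comm {b x y : ℝ} (hx : 0 < x) (hy : 0 < y) :
    x ^ logb b y = y ^ logb b x := by
  rw [rpow_def_of_pos hx, rpow_def_of_pos hy, logb, logb]
  ring_nf

lemma le_pow_natCeil_logb {b x : ℝ} (hb : 1 < b) (hx : 0 < x) : x ≤ b ^ ⌈logb b x⌉₊ := by
  calc x = b ^ logb b x := (rpow_logb (by linarith) hb.ne' hx).symm
    _ ≤ b ^ (⌈logb b x⌉₊ : ℝ) := rpow_le_rpow_of_exponent_le hb.le (Nat.le_ceil _)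
    _ = b ^ ⌈logb b x⌉₊ := rpow_natCast b _

lemma pow_natCeil_logb_le {b x α : ℝ} (hb : 1 < b) (hx : 1 ≤ x) (hα : 1 ≤ α) :
    α ^ ⌈logb b x⌉₊ ≤ α * x ^ logb b α := by
  have hα0 : 0 < α := by linarith
  calc α ^ ⌈logb b x⌉₊ = α ^ (⌈logb b x⌉₊ : ℝ) := (rpow_natCast α _).symm
    _ ≤ α ^ (logb b x + 1) :=
        rpow_le_rpow_of_exponent_le hα (Nat.ceil_lt_add_one (logb_nonneg hb hx)).le
    _ = α * x ^ logb b α := by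
        rw [rpow_add hα0, rpow_one, rpow_logb_comm hα0 (by linarith), mul_comm]

end Real

section Doubling

variable {N : ℝ → ℝ} {a b α : ℝ}

lemma le_pow_mul_of_doubling (ha : 0 < a) (hb : 1 ≤ b) (hα : 0 ≤ α)
    (hdouble : ∀ p, a ≤ p → N (b * p) ≤ α * N p) {p : ℝ} (hp : a ≤ p) :
    ∀ n : ℕ, N (b ^ n * p) ≤ α ^ n * N p
  | 0 => by simp
  | n + 1 => by
    have hbnp : a ≤ b ^ n * p := hp.trans (le_mul_of_one_le_left (by linarith) (one_le_pow₀ hb))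
    calc N (b ^ (n + 1) * p) = N (b * (b ^ n * p)) := by ring_nf
      _ ≤ α * N (b ^ n * p) := hdouble _ hbnp
      _ ≤ α * (α ^ n * N p) := by gcongr; exact le_pow_mul_of_doubling ha hb hα hdouble hp n
      _ = α ^ (n + 1) * N p := by ring

theorem le_mul_rpow_logb_mul_of_doubling (ha : 0 < a) (hb : 1 < b) (hα : 1 ≤ α)
    (hmono : MonotoneOn N (Set.Ici a)) (hdouble : ∀ p, a ≤ p → N (b * p) ≤ α * N p)
    {p q : ℝ} (hp : a ≤ p) (hpq : p ≤ q) (hNp : 0 ≤ N p) :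
    N q ≤ α * (q / p) ^ Real.logb b α * N p := by
  have hp0 : 0 < p := ha.trans_le hp
  have hqp : 1 ≤ q / p := (one_le_div hp0).mpr hpq
  set n := ⌈Real.logb b (q / p)⌉₊
  have hq_le : q ≤ b ^ n * p := by
    calc q = q / p * p := by field_simp
      _ ≤ b ^ n * p := by gcongr; exact Real.le_pow_natCeil_logb hb (by linarith)
  calc N q ≤ N (b ^ n * p) := hmono (hp.trans hpq) (hp.trans (hpq.trans hq_le)) hq_le
    _ ≤ α ^ n * N p := le_pow_mul_of_doubling ha hb.le (by linarith) hdouble hp n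
    _ ≤ α * (q / p) ^ Real.logb b α * N p := by
        gcongr; exact Real.pow_natCeil_logb_le hb hqp hα

end Doubling

namespace MeasureTheory

variable {α : Type*} {m : MeasurableSpace α} {μ : Measure α}

lemma lpNorm_ofReal_eq_integral_abs_rpow {f : α → ℝ} (hf : AEStronglyMeasurable f μ) {r : ℝ}
    (hr : 0 < r) : lpNorm f (ENNReal.ofReal r) μ = (∫ x, |f x| ^ r ∂μ) ^ (1 / r) := by
  rw [lpNorm_eq_integral_norm_rpow_toReal (by simpa using hr) ENNReal.ofReal_ne_top hf,
    ENNReal.toReal_ofReal hr.le, one_div]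
  simp only [Real.norm_eq_abs]

lemma lpNorm_le_lpNorm_of_exponent_le {E : Type*} [NormedAddCommGroup E] [IsProbabilityMeasure μ]
    {f : α → E} {p q : ENNReal} (hpq : p ≤ q) (hf : MemLp f q μ) :
    lpNorm f p μ ≤ lpNorm f q μ := by
  rw [← toReal_eLpNorm hf.1, ← toReal_eLpNorm hf.1]
  exact ENNReal.toReal_mono hf.eLpNorm_ne_top (eLpNorm_le_eLpNorm_of_exponent_le hpq hf.1)

end MeasureTheory

/-- If `‖X‖_{2p} ≤ α‖X‖_p` for all `p ≥ 2` then
`‖X‖_q ≤ α (q/p)^{log₂ α} ‖X‖_p` for all `q ≥ p ≥ 2`. -/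
theorem stmt2 {Ω : Type*} [MeasureSpace Ω] [IsProbabilityMeasure (ℙ : Measure Ω)]
    (X : Ω → ℝ) (hX : Measurable X) (α : ℝ) (hα : 1 ≤ α)
    (hmom : ∀ p : ℝ, 2 ≤ p → Integrable (fun ω => |X ω| ^ p))
    (hdouble : ∀ p : ℝ, 2 ≤ p →
      (∫ ω, |X ω| ^ (2 * p)) ^ (1 / (2 * p)) ≤ α * (∫ ω, |X ω| ^ p) ^ (1 / p)) :
    ∀ p q : ℝ, 2 ≤ p → p ≤ q →
      (∫ ω, |X ω| ^ q) ^ (1 / q)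
        ≤ α * (q / p) ^ Real.logb 2 α * (∫ ω, |X ω| ^ p) ^ (1 / p) := by
  intro p q hp hpq
  have hnorm : ∀ r, 2 ≤ r → lpNorm X (ENNReal.ofReal r) ℙ = (∫ ω, |X ω| ^ r) ^ (1 / r) :=
    fun r hr => lpNorm_ofReal_eq_integral_abs_rpow hX.aestronglyMeasurable (by linarith)
  have hmemLp : ∀ r, 2 ≤ r → MemLp X (ENNReal.ofReal r) ℙ := fun r hr => by
    rw [← integrable_norm_rpow_iff hX.aestronglyMeasurable (by simp; linarith) (by simp),
      ENNReal.toReal_ofReal (by linarith)]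
    exact hmom r hr
  have hmono : MonotoneOn (fun r => lpNorm X (ENNReal.ofReal r) ℙ) (Set.Ici 2) :=
    fun r _ s hs hrs => lpNorm_le_lpNorm_of_exponent_le (ENNReal.ofReal_le_ofReal hrs) (hmemLp s hs)
  have key := le_mul_rpow_logb_mul_of_doubling two_pos one_lt_two hα hmono
    (fun r hr => by simpa only [hnorm r hr, hnorm (2 * r) (by linarith)] using hdouble r hr)
    hp hpq lpNorm_nonneg
  simpa only [hnorm p hp, hnorm q (hp.trans hpq)] using key
end

section
/- Let X be a symmetric random variable with P(|X| ≥ t) = exp(−t^r) for t ≥ 0, where 0 < r < 2. Then for every p ≥ 2, ‖X‖_{2p} ≤ 2^{1/r}·‖X‖_p. -/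
/-!
By the layer-cake formula the tail `exp (-t ^ r)` gives `E|X|^q = Γ(q/r + 1)`, so with
`x = p/r` the claim reads `Γ(2x + 1)^{1/(2p)} ≤ 2^{x/p} Γ(x + 1)^{1/p}`, i.e.
`Γ(2x + 1) ≤ (2^x Γ(x + 1))^2`. The duplication formula turns this into
`Γ(x + 1/2) ≤ √π Γ(x + 1)`, which for `x ≥ 1` (here `r < 2 ≤ p`) already holds without
the `√π`, by convexity of `Γ` and `Γ(x) ≤ x Γ(x) = Γ(x + 1)`.
-/

open MeasureTheory ProbabilityTheory Real Set

theorem integral_abs_rpow_eq_Gamma_of_tail {α : Type*} [MeasurableSpace α] {μ : Measure α}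
    {X : α → ℝ} (hX : AEMeasurable X μ) {r q : ℝ} (hr : 0 < r) (hq : 0 < q)
    (htail : ∀ t : ℝ, 0 ≤ t → μ {ω | t ≤ |X ω|} = ENNReal.ofReal (exp (-t ^ r))) :
    ∫ ω, |X ω| ^ q ∂μ = Gamma (q / r + 1) := by
  have hlayer := lintegral_rpow_eq_lintegral_meas_le_mul μ
    (ae_of_all _ fun ω => abs_nonneg (X ω)) hX.abs hq
  have htail_integral : ∫⁻ t in Ioi 0, μ {ω | t ≤ |X ω|} * ENNReal.ofReal (t ^ (q - 1)) =
      ENNReal.ofReal (∫ t in Ioi 0, t ^ (q - 1) * exp (-t ^ r)) := by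
    rw [ofReal_integral_eq_lintegral_ofReal
      (integrableOn_rpow_mul_exp_neg_rpow (by linarith) hr)
      (ae_restrict_of_forall_mem measurableSet_Ioi fun t (ht : 0 < t) => by positivity)]
    refine setLIntegral_congr_fun measurableSet_Ioi fun t ht => ?_
    rw [htail t (le_of_lt ht), ← ENNReal.ofReal_mul (exp_nonneg _), mul_comm]
  rw [integral_eq_lintegral_of_nonneg_ae (ae_of_all _ fun ω => by positivity)
      (hX.abs.pow_const q).aestronglyMeasurable, hlayer, htail_integral,
    integral_rpow_mul_exp_neg_rpow hr (by linarith), sub_add_cancel, ← ENNReal.ofReal_mul hq.le,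
    ENNReal.toReal_ofReal (by have := Gamma_pos_of_pos (div_pos hq hr); positivity),
    Gamma_add_one (div_pos hq hr).ne']
  field_simp

theorem Gamma_add_half_le_Gamma_add_one {x : ℝ} (hx : 1 ≤ x) :
    Gamma (x + 1 / 2) ≤ Gamma (x + 1) := by
  have hx0 : 0 < x := by linarith
  have hmono : Gamma x ≤ Gamma (x + 1) := by
    rw [Gamma_add_one hx0.ne']
    nlinarith [Gamma_pos_of_pos hx0]
  have hconv := convexOn_Gamma.2 (mem_Ioi.mpr hx0) (mem_Ioi.mpr (by linarith : (0 : ℝ) < x + 1))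
    (by norm_num : (0 : ℝ) ≤ 1 / 2) (by norm_num : (0 : ℝ) ≤ 1 / 2) (by norm_num)
  rw [smul_eq_mul, smul_eq_mul, smul_eq_mul, smul_eq_mul,
    show 1 / 2 * x + 1 / 2 * (x + 1) = x + 1 / 2 by ring] at hconv
  linarith

theorem Gamma_two_mul_add_one_le {x : ℝ} (hx : 1 ≤ x) :
    Gamma (2 * x + 1) ≤ (2 ^ x * Gamma (x + 1)) ^ 2 := by
  have hx0 : 0 < x := by linarith
  have hc : 0 < (2 : ℝ) ^ (1 - 2 * x) * √π := by positivity
  have hpow : (2 : ℝ) ^ x * 2 ^ x * 2 ^ (1 - 2 * x) = 2 := by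
    rw [← rpow_add two_pos, ← rpow_add two_pos, show x + x + (1 - 2 * x) = 1 by ring, rpow_one]
  have hduplication : Gamma (2 * x + 1) * (2 ^ (1 - 2 * x) * √π) =
      2 * Gamma (x + 1) * Gamma (x + 1 / 2) := by
    rw [Gamma_add_one (by positivity), Gamma_add_one hx0.ne']
    linear_combination (-2 * x) * Gamma_mul_Gamma_add_half x
  have hsqrt_pi : 1 ≤ √π := one_le_sqrt.mpr (by linarith [pi_gt_three])
  refine le_of_mul_le_mul_right ?_ hc
  rw [hduplication]
  calc 2 * Gamma (x + 1) * Gamma (x + 1 / 2)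
      ≤ 2 * Gamma (x + 1) * Gamma (x + 1) := by
        gcongr; exact Gamma_add_half_le_Gamma_add_one hx
    _ ≤ 2 * Gamma (x + 1) * Gamma (x + 1) * √π :=
        le_mul_of_one_le_right (by positivity) hsqrt_pi
    _ = (2 ^ x * Gamma (x + 1)) ^ 2 * (2 ^ (1 - 2 * x) * √π) := by
        linear_combination (-Gamma (x + 1) ^ 2 * √π) * hpow

theorem stmt3_general {Ω : Type*} [MeasureSpace Ω] [IsProbabilityMeasure (ℙ : Measure Ω)]
    (X : Ω → ℝ) (hX : Measurable X)
    (r : ℝ) (hr0 : 0 < r) (hr2 : r < 2)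
    (htail : ∀ t : ℝ, 0 ≤ t → ℙ {ω | t ≤ |X ω|} = ENNReal.ofReal (Real.exp (-t ^ r))) :
    ∀ p : ℝ, 2 ≤ p →
      (∫ ω, |X ω| ^ (2 * p)) ^ (1 / (2 * p))
        ≤ (2 : ℝ) ^ (1 / r) * (∫ ω, |X ω| ^ p) ^ (1 / p) := by
  intro p hp
  have hp0 : 0 < p := by linarith
  have hx : 1 ≤ p / r := (one_le_div hr0).mpr (by linarith)
  have hG : 0 < Gamma (p / r + 1) := Gamma_pos_of_pos (by positivity)
  rw [integral_abs_rpow_eq_Gamma_of_tail hX.aemeasurable hr0 (by positivity) htail,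
    integral_abs_rpow_eq_Gamma_of_tail hX.aemeasurable hr0 hp0 htail, mul_div_assoc]
  calc Gamma (2 * (p / r) + 1) ^ (1 / (2 * p))
      ≤ ((2 ^ (p / r) * Gamma (p / r + 1)) ^ 2) ^ (1 / (2 * p)) :=
        rpow_le_rpow (Gamma_pos_of_pos (by positivity)).le (Gamma_two_mul_add_one_le hx)
          (by positivity)
    _ = (2 : ℝ) ^ (1 / r) * Gamma (p / r + 1) ^ (1 / p) := by
        rw [← rpow_natCast, ← rpow_mul (by positivity), mul_rpow (by positivity) hG.le,
          ← rpow_mul zero_le_two, Nat.cast_ofNat]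
        congr 2 <;> field_simp

/-- If `X` is symmetric with `P(|X| ≥ t) = exp(-t^r)`, `0 < r < 2`, then
`‖X‖_{2p} ≤ 2^{1/r} ‖X‖_p` for every `p ≥ 2`. -/
theorem stmt3 {Ω : Type*} [MeasureSpace Ω] [IsProbabilityMeasure (ℙ : Measure Ω)]
    (X : Ω → ℝ) (hX : Measurable X)
    (hsymm : IdentDistrib X (fun ω => -X ω))
    (r : ℝ) (hr0 : 0 < r) (hr2 : r < 2)
    (htail : ∀ t : ℝ, 0 ≤ t → ℙ {ω | t ≤ |X ω|} = ENNReal.ofReal (Real.exp (-t ^ r))) :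
    ∀ p : ℝ, 2 ≤ p →
      (∫ ω, |X ω| ^ (2 * p)) ^ (1 / (2 * p))
        ≤ (2 : ℝ) ^ (1 / r) * (∫ ω, |X ω| ^ p) ^ (1 / p) :=
  stmt3_general X hX r hr0 hr2 htail
end

section
/- Let X₁,…,Xₙ be i.i.d. real random variables, p ≥ 2, A = n^{1/p}·‖X₁‖_p, and assume A ≤ ‖X₁‖_{2p}. Then E max_{i≤n} |X_i|^{2p} ≥ (n/3)·(‖X₁‖_{2p} − A)^{2p}. -/
/-!
Let `A = n^{1/p} ‖X₁‖_p` and `g x = ((|x| - A)₊)^{2p}`. Pointwise,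
`max_i |X_i|^{2p} ≥ ∑_i g(X_i) ∏_{j<i} 1{|X_j| ≤ A}`, because only the first index with
`|X_i| > A` contributes. By independence the `i`-th term has expectation
`E g(X₁) · P(|X₁| ≤ A)^i`, and Markov's inequality gives `P(|X₁| ≤ A) ≥ 1 - 1/n`, so each term is
at least `E g(X₁) (1 - 1/n)^{n-1} ≥ E g(X₁) / 3`. Finally Minkowski's inequality
`‖X₁‖_{2p} ≤ ‖(|X₁| - A)₊‖_{2p} + A` gives `E g(X₁) ≥ (‖X₁‖_{2p} - A)^{2p}`.
-/

open MeasureTheory ProbabilityTheory Finset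

theorem one_div_three_le_one_sub_inv_pow (n : ℕ) : (1 : ℝ) / 3 ≤ (1 - (n : ℝ)⁻¹) ^ (n - 1) := by
  rcases n with _ | _ | m
  · norm_num
  · norm_num
  have hbase : (1 - ((m + 2 : ℕ) : ℝ)⁻¹) = (1 + ((m + 1 : ℕ) : ℝ)⁻¹)⁻¹ := by
    push_cast; field_simp; ring
  calc (1 : ℝ) / 3 ≤ (Real.exp 1)⁻¹ := by
        rw [one_div]; exact inv_anti₀ (Real.exp_pos 1) (Real.exp_one_lt_d9.trans (by norm_num)).le
    _ ≤ ((1 + ((m + 1 : ℕ) : ℝ)⁻¹) ^ (m + 1))⁻¹ :=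
        inv_anti₀ (by positivity) Real.one_add_inv_pow_le_exp
    _ = (1 - ((m + 2 : ℕ) : ℝ)⁻¹) ^ (m + 2 - 1) := by rw [hbase, inv_pow]; rfl

theorem Finset.prod_ite_eq_mul_prod {ι M : Type*} [Fintype ι] [DecidableEq ι] [CommMonoid M]
    {s : Finset ι} {i : ι} (hi : i ∉ s) (a b : ι → M) :
    ∏ j, (if j = i then a j else if j ∈ s then b j else 1) = a i * ∏ j ∈ s, b j := by
  rw [Finset.prod_ite, Finset.prod_ite_mem]
  simp [Finset.filter_eq', Finset.filter_ne', Finset.erase_eq_of_notMem hi]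

theorem prod_indicator_one_nonneg {ι : Type*} (s : Finset ι) (S : Set ℝ) (x : ι → ℝ) :
    0 ≤ ∏ j ∈ s, S.indicator (1 : ℝ → ℝ) (x j) :=
  prod_nonneg fun _ _ => Set.indicator_nonneg (fun _ _ => zero_le_one) _

theorem prod_indicator_one_le_one {ι : Type*} (s : Finset ι) (S : Set ℝ) (x : ι → ℝ) :
    ∏ j ∈ s, S.indicator (1 : ℝ → ℝ) (x j) ≤ 1 :=
  prod_le_one (fun _ _ => Set.indicator_nonneg (fun _ _ => zero_le_one) _)
    (fun _ _ => Set.indicator_le_self' (fun _ _ => zero_le_one) _)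

theorem sum_mul_prod_Iio_indicator_le_iSup {ι : Type*} [Fintype ι] [LinearOrder ι]
    [LocallyFiniteOrderBot ι] {S : Set ℝ} {g : ℝ → ℝ} (hg : 0 ≤ g) (hgS : ∀ x ∈ S, g x = 0)
    (x : ι → ℝ) : ∑ i, g (x i) * ∏ j ∈ Iio i, S.indicator 1 (x j) ≤ ⨆ i, g (x i) := by
  by_cases hexit : ∃ i, x i ∉ S
  · -- only the first index leaving `S` contributes
    obtain ⟨i₁, hi₁, hmin⟩ := WellFounded.has_min wellFounded_lt {i | x i ∉ S} hexit
    have hsum : ∑ i, g (x i) * ∏ j ∈ Iio i, S.indicator 1 (x j)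
        = g (x i₁) * ∏ j ∈ Iio i₁, S.indicator 1 (x j) := by
      refine sum_eq_single i₁ (fun i _ hne => ?_) (by simp)
      rcases hne.lt_or_gt with hlt | hgt
      · rw [hgS _ (not_not.mp fun h => hmin i h hlt), zero_mul]
      · rw [prod_eq_zero (mem_Iio.mpr hgt) (Set.indicator_of_notMem hi₁ _), mul_zero]
    rw [hsum]
    calc g (x i₁) * ∏ j ∈ Iio i₁, S.indicator 1 (x j) ≤ g (x i₁) :=
          mul_le_of_le_one_right (hg _) (prod_indicator_one_le_one _ _ _)
      _ ≤ ⨆ i, g (x i) := le_ciSup (f := fun i => g (x i)) (Set.finite_range _).bddAbove i₁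
  · push Not at hexit
    simp only [hgS _ (hexit _), zero_mul, sum_const_zero]
    exact Real.iSup_nonneg fun _ => le_rfl

section

variable {Ω : Type*} [MeasurableSpace Ω] {μ : Measure Ω}

theorem one_sub_inv_le_measureReal_abs_le [IsProbabilityMeasure μ] {Z : Ω → ℝ}
    (hZ : Measurable Z) {p a c : ℝ} (hp : 0 < p) (ha : 0 ≤ a) (hc : 0 < c)
    (hint : Integrable (fun ω => |Z ω| ^ p) μ) (hca : c * ∫ ω, |Z ω| ^ p ∂μ ≤ a ^ p) :
    1 - c⁻¹ ≤ μ.real {ω | |Z ω| ≤ a} := by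
  have hmeas : MeasurableSet {ω | |Z ω| ≤ a} := measurableSet_le hZ.abs measurable_const
  suffices μ.real {ω | |Z ω| ≤ a}ᶜ ≤ c⁻¹ by
    rw [probReal_compl_eq_one_sub hmeas] at this; linarith
  have hnonneg : 0 ≤ᵐ[μ] fun ω => |Z ω| ^ p := ae_of_all _ fun ω => by positivity
  rcases ha.eq_or_lt with rfl | ha
  · -- `a = 0` forces `Z = 0` almost surely
    rw [Real.zero_rpow hp.ne'] at hca
    have hzero : (fun ω => |Z ω| ^ p) =ᵐ[μ] 0 :=
      (integral_eq_zero_iff_of_nonneg_ae hnonneg hint).mp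
        (le_antisymm (nonpos_of_mul_nonpos_right hca hc) (integral_nonneg_of_ae hnonneg))
    have hnull : μ {ω | |Z ω| ≤ 0}ᶜ = 0 := ae_iff.mp <| hzero.mono fun ω hω =>
      ((Real.rpow_eq_zero (abs_nonneg _) hp.ne').mp hω).le
    rw [measureReal_def, hnull, ENNReal.toReal_zero]
    positivity
  · have hap : 0 < a ^ p := Real.rpow_pos_of_pos ha p
    have hmarkov := mul_meas_ge_le_integral_of_nonneg hnonneg hint (a ^ p)
    have hsub : {ω | |Z ω| ≤ a}ᶜ ⊆ {ω | a ^ p ≤ |Z ω| ^ p} := fun ω (hω : ¬ |Z ω| ≤ a) =>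
      Real.rpow_le_rpow ha.le (not_le.mp hω).le hp.le
    calc μ.real {ω | |Z ω| ≤ a}ᶜ ≤ μ.real {ω | a ^ p ≤ |Z ω| ^ p} := measureReal_mono hsub
      _ ≤ c⁻¹ := by
        rw [← one_div, le_div_iff₀ hc]
        nlinarith [mul_le_mul_of_nonneg_left hmarkov hc.le]

theorem integral_abs_rpow_rpow_inv_le_add [IsProbabilityMeasure μ] {Z : Ω → ℝ}
    (hZ : AEStronglyMeasurable Z μ) {r a : ℝ} (hr : 1 ≤ r) (ha : 0 ≤ a)
    (hint : Integrable (fun ω => |Z ω| ^ r) μ) :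
    (∫ ω, |Z ω| ^ r ∂μ) ^ (1 / r) ≤ (∫ ω, max (|Z ω| - a) 0 ^ r ∂μ) ^ (1 / r) + a := by
  set Y : Ω → ℝ := fun ω => max (|Z ω| - a) 0
  set q := ENNReal.ofReal r
  have hq0 : q ≠ 0 := by simp [q]; linarith
  have hq_top : q ≠ ⊤ := ENNReal.ofReal_ne_top
  have hnormY : ∀ ω, ‖Y ω‖ = Y ω := fun ω => abs_of_nonneg (le_max_right _ _)
  have hZLp : MemLp Z q μ := by
    rw [← integrable_norm_rpow_iff hZ hq0 hq_top, ENNReal.toReal_ofReal (by linarith)]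
    simpa only [Real.norm_eq_abs] using hint
  have hYLp : MemLp Y q μ := hZLp.mono (by fun_prop) <| ae_of_all _ fun ω => by
    rw [hnormY, Real.norm_eq_abs]
    exact max_le (by linarith) (abs_nonneg _)
  have hZY : ∀ ω, ‖Z ω‖ ≤ ‖Y ω + a‖ := fun ω =>
    (by linarith [le_max_left (|Z ω| - a) 0] : |Z ω| ≤ Y ω + a).trans (le_abs_self _)
  have htri : eLpNorm Z q μ ≤ eLpNorm Y q μ + ENNReal.ofReal a := calc
    eLpNorm Z q μ ≤ eLpNorm (Y + fun _ => a) q μ := eLpNorm_mono hZY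
    _ ≤ eLpNorm Y q μ + eLpNorm (fun _ => a) q μ :=
      eLpNorm_add_le hYLp.1 aestronglyMeasurable_const (by simpa [q] using hr)
    _ = eLpNorm Y q μ + ENNReal.ofReal a := by
      simp [eLpNorm_const _ hq0 (IsProbabilityMeasure.ne_zero μ), Real.enorm_of_nonneg ha]
  rw [hZLp.eLpNorm_eq_integral_rpow_norm hq0 hq_top, hYLp.eLpNorm_eq_integral_rpow_norm hq0 hq_top,
    ← ENNReal.ofReal_add (by positivity) ha, ENNReal.ofReal_le_ofReal_iff (by positivity),
    ENNReal.toReal_ofReal (by linarith)] at htri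
  simpa only [hnormY, Real.norm_eq_abs, one_div] using htri

theorem sub_rpow_le_integral_max_sub_rpow [IsProbabilityMeasure μ] {Z : Ω → ℝ}
    (hZ : AEStronglyMeasurable Z μ) {r a : ℝ} (hr : 1 ≤ r) (ha : 0 ≤ a)
    (hint : Integrable (fun ω => |Z ω| ^ r) μ) (haZ : a ≤ (∫ ω, |Z ω| ^ r ∂μ) ^ (1 / r)) :
    ((∫ ω, |Z ω| ^ r ∂μ) ^ (1 / r) - a) ^ r ≤ ∫ ω, max (|Z ω| - a) 0 ^ r ∂μ := calc
  _ ≤ ((∫ ω, max (|Z ω| - a) 0 ^ r ∂μ) ^ (1 / r)) ^ r :=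
    Real.rpow_le_rpow (sub_nonneg.mpr haZ)
      (by linarith [integral_abs_rpow_rpow_inv_le_add hZ hr ha hint]) (by linarith)
  _ = ∫ ω, max (|Z ω| - a) 0 ^ r ∂μ := by
    rw [one_div, Real.rpow_inv_rpow (integral_nonneg fun ω => by positivity) (by linarith)]

theorem integrable_iSup_abs_rpow {ι : Type*} [Fintype ι] [Nonempty ι] {X : ι → Ω → ℝ}
    (hX : ∀ i, Measurable (X i)) {r : ℝ} (hint : ∀ i, Integrable (fun ω => |X i ω| ^ r) μ) :
    Integrable (fun ω => (⨆ i, |X i ω|) ^ r) μ := by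
  refine (integrable_finsetSum univ fun i _ => hint i).mono'
    ((Measurable.iSup fun i => (hX i).abs).pow_const r).aestronglyMeasurable <|
      ae_of_all _ fun ω => ?_
  obtain ⟨i, hi⟩ := exists_eq_ciSup_of_finite (f := fun i => |X i ω|)
  rw [← hi, Real.norm_eq_abs, abs_of_nonneg (by positivity)]
  exact single_le_sum (f := fun i => |X i ω| ^ r) (fun j _ => by positivity) (mem_univ i)

theorem ProbabilityTheory.iIndepFun.integral_comp_mul_prod_comp {ι : Type*} [Fintype ι]
    [DecidableEq ι] {X : ι → Ω → ℝ} (hindep : iIndepFun X μ) (hX : ∀ i, Measurable (X i))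
    {g h : ℝ → ℝ} (hg : Measurable g) (hh : Measurable h) {s : Finset ι} {i : ι} (hi : i ∉ s) :
    ∫ ω, g (X i ω) * ∏ j ∈ s, h (X j ω) ∂μ
      = (∫ ω, g (X i ω) ∂μ) * ∏ j ∈ s, ∫ ω, h (X j ω) ∂μ := by
  let f : ι → ℝ → ℝ := fun j x => if j = i then g x else if j ∈ s then h x else 1
  have hf : ∀ j, Measurable (f j) := fun j => by
    by_cases hji : j = i <;> by_cases hjs : j ∈ s <;> simp [f, hji, hjs, hg, hh]
  have hint : ∀ j, ∫ ω, f j (X j ω) ∂μ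
      = if j = i then ∫ ω, g (X i ω) ∂μ else if j ∈ s then ∫ ω, h (X j ω) ∂μ else 1 := fun j => by
    have := hindep.isProbabilityMeasure
    by_cases hji : j = i <;> by_cases hjs : j ∈ s <;> simp [f, hji, hjs]
  have := hindep.integral_fun_prod_comp (fun j => (hX j).aemeasurable)
    (fun j => (hf j).aestronglyMeasurable)
  simp only [f, hint, Finset.prod_ite_eq_mul_prod hi] at this
  exact this

theorem mul_measureReal_pow_mul_integral_le {n : ℕ} {X : Fin n → Ω → ℝ}
    (hindep : iIndepFun X μ) (hX : ∀ i, Measurable (X i)) {i₀ : Fin n}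
    (hid : ∀ i, IdentDistrib (X i) (X i₀) μ μ) {S : Set ℝ} (hS : MeasurableSet S) {g : ℝ → ℝ}
    (hg : Measurable g) (hg0 : 0 ≤ g) (hgS : ∀ x ∈ S, g x = 0) {F : Ω → ℝ}
    (hF : Integrable F μ) (hgF : ∀ i ω, g (X i ω) ≤ F ω) :
    n * μ.real (X i₀ ⁻¹' S) ^ (n - 1) * ∫ ω, g (X i₀ ω) ∂μ ≤ ∫ ω, F ω ∂μ := by
  have := hindep.isProbabilityMeasure
  set q := μ.real (X i₀ ⁻¹' S)
  have hind : Measurable (S.indicator (1 : ℝ → ℝ)) := measurable_one.indicator hS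
  have hq : ∀ j, ∫ ω, S.indicator 1 (X j ω) ∂μ = q := fun j =>
    ((hid j).comp hind).integral_eq.trans (integral_indicator_one ((hX i₀) hS))
  have hgX : ∀ i, ∫ ω, g (X i ω) ∂μ = ∫ ω, g (X i₀ ω) ∂μ := fun i => ((hid i).comp hg).integral_eq
  have hterm : ∀ i : Fin n, ∫ ω, g (X i ω) * ∏ j ∈ Iio i, S.indicator 1 (X j ω) ∂μ
      = (∫ ω, g (X i₀ ω) ∂μ) * q ^ (i : ℕ) := fun i => by
    rw [hindep.integral_comp_mul_prod_comp hX hg hind (by simp), hgX i]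
    simp [hq]
  have hterm_int : ∀ i : Fin n,
      Integrable (fun ω => g (X i ω) * ∏ j ∈ Iio i, S.indicator 1 (X j ω)) μ := fun i =>
    hF.mono' (by fun_prop) <| ae_of_all _ fun ω => by
      rw [Real.norm_eq_abs, abs_of_nonneg (mul_nonneg (hg0 _) (prod_indicator_one_nonneg _ _ _))]
      exact (mul_le_of_le_one_right (hg0 _) (prod_indicator_one_le_one _ _ _)).trans (hgF i ω)
  calc (n : ℝ) * q ^ (n - 1) * ∫ ω, g (X i₀ ω) ∂μ
      = ∑ _i : Fin n, (∫ ω, g (X i₀ ω) ∂μ) * q ^ (n - 1) := by simp; ring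
    _ ≤ ∑ i : Fin n, (∫ ω, g (X i₀ ω) ∂μ) * q ^ (i : ℕ) := sum_le_sum fun i _ =>
         mul_le_mul_of_nonneg_left (pow_le_pow_of_le_one measureReal_nonneg measureReal_le_one
          (by omega)) (integral_nonneg fun ω => hg0 _)
    _ = ∫ ω, ∑ i, g (X i ω) * ∏ j ∈ Iio i, S.indicator 1 (X j ω) ∂μ := by
        rw [integral_finsetSum _ fun i _ => hterm_int i]
        simp [hterm]
    _ ≤ ∫ ω, F ω ∂μ := integral_mono (integrable_finsetSum _ fun i _ => hterm_int i) hF fun ω =>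
        (sum_mul_prod_Iio_indicator_le_iSup hg0 hgS _).trans
          (Real.iSup_le (hgF · ω) ((hg0 _).trans (hgF i₀ ω)))

theorem mul_measureReal_pow_mul_integral_max_sub_rpow_le {n : ℕ} {X : Fin n → Ω → ℝ}
    (hindep : iIndepFun X μ) (hX : ∀ i, Measurable (X i)) {i₀ : Fin n}
    (hid : ∀ i, IdentDistrib (X i) (X i₀) μ μ) {r A : ℝ} (hr : 0 < r) (hA : 0 ≤ A)
    (hint : Integrable (fun ω => |X i₀ ω| ^ r) μ) :
    n * μ.real {ω | |X i₀ ω| ≤ A} ^ (n - 1) * ∫ ω, max (|X i₀ ω| - A) 0 ^ r ∂μ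
      ≤ ∫ ω, (⨆ i, |X i ω|) ^ r ∂μ := by
  have : Nonempty (Fin n) := ⟨i₀⟩
  refine mul_measureReal_pow_mul_integral_le hindep hX hid
    (measurableSet_le measurable_abs measurable_const) (g := fun x => max (|x| - A) 0 ^ r)
    (by fun_prop) (fun x => by positivity) (fun x (hx : |x| ≤ A) => ?_)
    (integrable_iSup_abs_rpow hX fun i =>
      ((hid i).comp (by fun_prop : Measurable fun x : ℝ => |x| ^ r)).integrable_iff.mpr hint)
    fun i ω => Real.rpow_le_rpow (le_max_right _ _)
      ((max_le (by linarith [abs_nonneg (X i ω)]) (abs_nonneg _)).trans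
        (le_ciSup (Set.finite_range _).bddAbove i)) hr.le
  simp only [max_eq_right (sub_nonpos.mpr hx), Real.zero_rpow hr.ne']

end

/-- For i.i.d. `X₁,…,Xₙ`, `p ≥ 2`, `A = n^{1/p}‖X₁‖_p ≤ ‖X₁‖_{2p}`, one has
`E max_i |X_i|^{2p} ≥ (n/3)(‖X₁‖_{2p} - A)^{2p}`. -/
theorem stmt5 {Ω : Type*} [MeasureSpace Ω] [IsProbabilityMeasure (ℙ : Measure Ω)]
    (n : ℕ) (hn : 0 < n) (X : Fin n → Ω → ℝ) (hX : ∀ i, Measurable (X i))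
    (hindep : iIndepFun X)
    (hid : ∀ i, IdentDistrib (X i) (X ⟨0, hn⟩))
    (p : ℝ) (hp : 2 ≤ p)
    (hintp : Integrable (fun ω => |X ⟨0, hn⟩ ω| ^ p))
    (hint2p : Integrable (fun ω => |X ⟨0, hn⟩ ω| ^ (2 * p)))
    (hA : (n : ℝ) ^ (1 / p) * (∫ ω, |X ⟨0, hn⟩ ω| ^ p) ^ (1 / p)
        ≤ (∫ ω, |X ⟨0, hn⟩ ω| ^ (2 * p)) ^ (1 / (2 * p))) :
    (n : ℝ) / 3 *
        ((∫ ω, |X ⟨0, hn⟩ ω| ^ (2 * p)) ^ (1 / (2 * p))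
          - (n : ℝ) ^ (1 / p) * (∫ ω, |X ⟨0, hn⟩ ω| ^ p) ^ (1 / p)) ^ (2 * p)
      ≤ ∫ ω, (⨆ i, |X i ω|) ^ (2 * p) := by
  set X₀ := X ⟨0, hn⟩
  set A := (n : ℝ) ^ (1 / p) * (∫ ω, |X₀ ω| ^ p) ^ (1 / p) with hA_def
  have hA0 : 0 ≤ A := by positivity
  have hAp : A ^ p = n * ∫ ω, |X₀ ω| ^ p := by
    rw [hA_def, ← Real.mul_rpow (by positivity) (integral_nonneg fun ω => by positivity), one_div,
      Real.rpow_inv_rpow (by positivity) (by linarith)]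
  have hmarkov := one_sub_inv_le_measureReal_abs_le (hX _) (by linarith) hA0 (by positivity) hintp
    hAp.ge
  have htail := sub_rpow_le_integral_max_sub_rpow (hX _).aestronglyMeasurable (by linarith) hA0
    hint2p hA
  have hthird := one_div_three_le_one_sub_inv_pow n
  calc (n : ℝ) / 3 * ((∫ ω, |X₀ ω| ^ (2 * p)) ^ (1 / (2 * p)) - A) ^ (2 * p)
      = n * (1 / 3) * ((∫ ω, |X₀ ω| ^ (2 * p)) ^ (1 / (2 * p)) - A) ^ (2 * p) := by ring
    _ ≤ n * (1 - (n : ℝ)⁻¹) ^ (n - 1) * ∫ ω, max (|X₀ ω| - A) 0 ^ (2 * p) := by gcongr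
    _ ≤ n * (ℙ : Measure Ω).real {ω | |X₀ ω| ≤ A} ^ (n - 1)
          * ∫ ω, max (|X₀ ω| - A) 0 ^ (2 * p) := by
      gcongr
      exact sub_nonneg.mpr (inv_le_one_of_one_le₀ (by exact_mod_cast hn))
    _ ≤ ∫ ω, (⨆ i, |X i ω|) ^ (2 * p) :=
      mul_measureReal_pow_mul_integral_max_sub_rpow_le hindep hX hid (by linarith) hA0 hint2p
end

section
/- Let X₁,…,Xₙ be independent real random variables with E X_i² = 1 for all i, let a > 0, p ≥ 1, and let (t_i*) be the nonincreasing rearrangement of (|t_i|). If a ≥ (1/p)·(Σ_{i≤p} t_i* + √p·(Σ_{i>p}(t_i*)²)^{1/2}), then Σ_{i=1}^n E(|t_i X_i| − a)₊ ≤ 2pa. -/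
/-!
Each term is bounded in two ways, using only `E X² = 1`: `E(|uX| - a)₊ ≤ E|uX| ≤ |u|`,
and `(y - a)₊ ≤ y² / a` gives `E(|uX| - a)₊ ≤ u² / a`. Use the first bound on the `⌊p⌋`
largest coefficients and the second on the rest; the hypothesis on `a` makes each of the two
resulting sums at most `pa`, the second because `√p · (∑_{i>p} (t_i*)²)^{1/2} ≤ pa` means
`∑_{i>p} (t_i*)² ≤ pa²`.
-/

open MeasureTheory ProbabilityTheory Finset

lemma max_abs_sub_zero_le_abs {u a : ℝ} (ha : 0 ≤ a) : max (|u| - a) 0 ≤ |u| :=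
  max_le (by linarith) (abs_nonneg u)

lemma max_abs_sub_zero_le_sq_div {u a : ℝ} (ha : 0 < a) : max (|u| - a) 0 ≤ u ^ 2 / a := by
  refine max_le ?_ (by positivity)
  rw [le_div_iff₀ ha, ← sq_abs u]
  nlinarith [sq_nonneg (|u| - a)]

section Integral

variable {Ω : Type*} {m : MeasurableSpace Ω} {μ : Measure Ω} {X : Ω → ℝ}

lemma integral_max_abs_mul_sub_le_abs [IsProbabilityMeasure μ]
    (hX2 : Integrable (fun ω => X ω ^ 2) μ) (hvar : ∫ ω, X ω ^ 2 ∂μ = 1) (t : ℝ)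
    {a : ℝ} (ha : 0 ≤ a) : ∫ ω, max (|t * X ω| - a) 0 ∂μ ≤ |t| :=
  calc ∫ ω, max (|t * X ω| - a) 0 ∂μ ≤ ∫ ω, |t| / 2 * (X ω ^ 2 + 1) ∂μ := by
        refine integral_mono_of_nonneg (.of_forall fun _ => le_max_right _ _)
          ((hX2.add (integrable_const 1)).const_mul _) (.of_forall fun ω => ?_)
        have hX : |X ω| ≤ (X ω ^ 2 + 1) / 2 := by
          nlinarith [sq_nonneg (|X ω| - 1), sq_abs (X ω)]
        calc max (|t * X ω| - a) 0 ≤ |t| * |X ω| :=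
              abs_mul t (X ω) ▸ max_abs_sub_zero_le_abs ha
          _ ≤ |t| * ((X ω ^ 2 + 1) / 2) := mul_le_mul_of_nonneg_left hX (abs_nonneg t)
          _ = |t| / 2 * (X ω ^ 2 + 1) := by ring
    _ = |t| := by
        rw [integral_const_mul, integral_add hX2 (integrable_const 1), hvar]
        simp only [integral_const, probReal_univ, smul_eq_mul, mul_one]
        ring

lemma integral_max_abs_mul_sub_le_sq_div (hX2 : Integrable (fun ω => X ω ^ 2) μ)
    (hvar : ∫ ω, X ω ^ 2 ∂μ = 1) (t : ℝ) {a : ℝ} (ha : 0 < a) :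
    ∫ ω, max (|t * X ω| - a) 0 ∂μ ≤ t ^ 2 / a :=
  calc ∫ ω, max (|t * X ω| - a) 0 ∂μ ≤ ∫ ω, t ^ 2 / a * X ω ^ 2 ∂μ := by
        refine integral_mono_of_nonneg (.of_forall fun _ => le_max_right _ _)
          (hX2.const_mul _) (.of_forall fun ω => ?_)
        calc max (|t * X ω| - a) 0 ≤ (t * X ω) ^ 2 / a := max_abs_sub_zero_le_sq_div ha
          _ = t ^ 2 / a * X ω ^ 2 := by ring
    _ = t ^ 2 / a := by rw [integral_const_mul, hvar, mul_one]

end Integral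

lemma div_le_mul_of_sqrt_mul_sqrt_le {p a Q : ℝ} (hp : 0 < p) (ha : 0 < a)
    (h : √p * √Q ≤ p * a) : Q / a ≤ p * a := by
  rw [← Real.sqrt_mul hp.le, Real.sqrt_le_iff] at h
  have hQ : Q ≤ p * a ^ 2 := le_of_mul_le_mul_left (by nlinarith [h.2]) hp
  rw [div_le_iff₀ ha]
  nlinarith

theorem stmt9_general {Ω : Type*} [MeasureSpace Ω] [IsProbabilityMeasure (ℙ : Measure Ω)]
    (n : ℕ) (X : Fin n → Ω → ℝ)
    (h2 : ∀ i, Integrable (fun ω => X i ω ^ 2)) (hvar : ∀ i, ∫ ω, X i ω ^ 2 = 1)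
    (t : Fin n → ℝ) (σ : Equiv.Perm (Fin n))
    (p a : ℝ) (hp : 1 ≤ p) (ha : 0 < a)
    (haa : (1 / p) * ((∑ i ∈ Finset.univ.filter (fun i : Fin n => (i : ℕ) < ⌊p⌋₊), |t (σ i)|)
        + Real.sqrt p *
          (∑ i ∈ Finset.univ.filter (fun i : Fin n => ⌊p⌋₊ ≤ (i : ℕ)), |t (σ i)| ^ 2)
            ^ ((1 : ℝ) / 2)) ≤ a) :
    ∑ i, ∫ ω, max (|t i * X i ω| - a) 0 ≤ 2 * p * a := by
  have hp0 : 0 < p := by linarith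
  set head := ∑ i ∈ univ.filter (fun i : Fin n => (i : ℕ) < ⌊p⌋₊), |t (σ i)|
  set tail := ∑ i ∈ univ.filter (fun i : Fin n => ⌊p⌋₊ ≤ (i : ℕ)), |t (σ i)| ^ 2
  rw [one_div_mul_eq_div, div_le_iff₀ hp0, ← Real.sqrt_eq_rpow, mul_comm a] at haa
  have hhead : head ≤ p * a := by linarith [show 0 ≤ √p * √tail by positivity]
  have htail : tail / a ≤ p * a := div_le_mul_of_sqrt_mul_sqrt_le hp0 ha <| by
    linarith [show 0 ≤ head from sum_nonneg fun _ _ => abs_nonneg _]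
  rw [← Equiv.sum_comp σ, ← sum_filter_add_sum_filter_not univ
    fun i : Fin n => (i : ℕ) < ⌊p⌋₊]
  calc _ ≤ head + tail / a := by
        simp only [head, tail, not_lt, sum_div, sq_abs]
        exact add_le_add
          (sum_le_sum fun i _ => integral_max_abs_mul_sub_le_abs (h2 _) (hvar _) _ ha.le)
          (sum_le_sum fun i _ => integral_max_abs_mul_sub_le_sq_div (h2 _) (hvar _) _ ha)
    _ ≤ 2 * p * a := by linarith

/-- If `E X_i² = 1`, `(t_i*)` is the nonincreasing rearrangement of `(|t_i|)` (realized
by a permutation `σ`), and `a ≥ (1/p)(∑_{i≤p} t_i* + √p (∑_{i>p}(t_i*)²)^{1/2})`, then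
`∑ E(|t_i X_i| - a)₊ ≤ 2pa`. -/
theorem stmt9 {Ω : Type*} [MeasureSpace Ω] [IsProbabilityMeasure (ℙ : Measure Ω)]
    (n : ℕ) (X : Fin n → Ω → ℝ) (hX : ∀ i, Measurable (X i))
    (hindep : iIndepFun X)
    (h2 : ∀ i, Integrable (fun ω => X i ω ^ 2)) (hvar : ∀ i, ∫ ω, X i ω ^ 2 = 1)
    (t : Fin n → ℝ) (σ : Equiv.Perm (Fin n))
    (hσ : ∀ i j : Fin n, i ≤ j → |t (σ j)| ≤ |t (σ i)|)
    (p a : ℝ) (hp : 1 ≤ p) (ha : 0 < a)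
    (haa : (1 / p) * ((∑ i ∈ Finset.univ.filter (fun i : Fin n => (i : ℕ) < ⌊p⌋₊), |t (σ i)|)
        + Real.sqrt p *
          (∑ i ∈ Finset.univ.filter (fun i : Fin n => ⌊p⌋₊ ≤ (i : ℕ)), |t (σ i)| ^ 2)
            ^ ((1 : ℝ) / 2)) ≤ a) :
    ∑ i, ∫ ω, max (|t i * X i ω| - a) 0 ≤ 2 * p * a :=
  stmt9_general n X h2 hvar t σ p a hp ha haa
end

section
/- Let X₁,…,Xₙ be independent real random variables with E X_i² = 1, t ∈ ℝⁿ, a > 0, p ≥ 1 with a ≥ (1/√p)·(Σ_{i>p}(t_i*)²)^{1/2}. Then Σ_{i=1}^n E min{(t_iX_i)², a²} ≤ p·a² + Σ_{i>p}(t_i*)² ≤ 2p·a². -/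
open MeasureTheory ProbabilityTheory

/-! Each summand satisfies `E min{(t_i X_i)², a²} ≤ min{t_i², a²}`, since the truncated variable is
dominated both by `(t_i X_i)²`, of mean `t_i²`, and by the constant `a²`. After reordering the
coordinates decreasingly, the bound `a²` is spent on the first `⌊p⌋` of them and the bound `t_i²`
on the rest; the hypothesis on `a` says exactly that the tail `∑_{i>p} (t_i*)²` is at most `p a²`. -/

theorem integral_min_mul_sq_le {Ω : Type*} {_ : MeasurableSpace Ω} {μ : Measure Ω}
    [IsProbabilityMeasure μ] {Y : Ω → ℝ} (hY : Integrable (fun ω => Y ω ^ 2) μ)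
    (c : ℝ) {b : ℝ} (hb : 0 ≤ b) :
    ∫ ω, min ((c * Y ω) ^ 2) b ∂μ ≤ min (c ^ 2 * ∫ ω, Y ω ^ 2 ∂μ) b := by
  have hnonneg : 0 ≤ᵐ[μ] fun ω => min ((c * Y ω) ^ 2) b :=
    .of_forall fun ω => le_min (sq_nonneg _) hb
  refine le_min ?_ ?_
  · calc ∫ ω, min ((c * Y ω) ^ 2) b ∂μ ≤ ∫ ω, c ^ 2 * Y ω ^ 2 ∂μ :=
          integral_mono_of_nonneg hnonneg (hY.const_mul _)
            (.of_forall fun ω => (min_le_left _ _).trans_eq (mul_pow _ _ _))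
      _ = c ^ 2 * ∫ ω, Y ω ^ 2 ∂μ := integral_const_mul _ _
  · calc ∫ ω, min ((c * Y ω) ^ 2) b ∂μ ≤ ∫ _, b ∂μ :=
          integral_mono_of_nonneg hnonneg (integrable_const b)
            (.of_forall fun ω => min_le_right _ _)
      _ = b := by simp

theorem Fin.sum_min_le_nsmul_add_sum_tail {n : ℕ} (f : Fin n → ℝ) {b : ℝ} (hb : 0 ≤ b) (k : ℕ) :
    ∑ i, min (f i) b ≤ k • b + ∑ i ∈ Finset.univ.filter (fun i : Fin n => k ≤ (i : ℕ)), f i := by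
  rw [← Finset.sum_filter_not_add_sum_filter Finset.univ (fun i : Fin n => k ≤ (i : ℕ))]
  gcongr with i
  · have hcard : (Finset.univ.filter (fun i : Fin n => ¬ k ≤ (i : ℕ))).card ≤ k := by
      simpa using Finset.card_le_card_of_injOn (t := Finset.range k) (fun i : Fin n => (i : ℕ))
        (fun i hi => by simpa using hi) Fin.val_injective.injOn
    calc ∑ i ∈ Finset.univ.filter (fun i : Fin n => ¬ k ≤ (i : ℕ)), min (f i) b
        ≤ (Finset.univ.filter (fun i : Fin n => ¬ k ≤ (i : ℕ))).card • b :=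
          Finset.sum_le_card_nsmul _ _ _ fun i _ => min_le_right _ _
      _ ≤ k • b := nsmul_le_nsmul_left hb hcard
  · exact min_le_left _ _

theorem le_mul_sq_of_inv_sqrt_mul_rpow_half_le {p s a : ℝ} (hp : 0 < p) (hs : 0 ≤ s)
    (h : 1 / Real.sqrt p * s ^ ((1 : ℝ) / 2) ≤ a) : s ≤ p * a ^ 2 := by
  rw [one_div, inv_mul_le_iff₀ (Real.sqrt_pos.2 hp), ← Real.sqrt_eq_rpow] at h
  calc s = Real.sqrt s ^ 2 := (Real.sq_sqrt hs).symm
    _ ≤ (Real.sqrt p * a) ^ 2 := pow_le_pow_left₀ (Real.sqrt_nonneg s) h 2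
    _ = p * a ^ 2 := by rw [mul_pow, Real.sq_sqrt hp.le]

theorem stmt10_general {Ω : Type*} [MeasureSpace Ω] [IsProbabilityMeasure (ℙ : Measure Ω)]
    (n : ℕ) (X : Fin n → Ω → ℝ)
    (h2 : ∀ i, Integrable (fun ω => X i ω ^ 2)) (hvar : ∀ i, ∫ ω, X i ω ^ 2 = 1)
    (t : Fin n → ℝ) (σ : Equiv.Perm (Fin n))
    (p a : ℝ) (hp : 1 ≤ p)
    (haa : (1 / Real.sqrt p) *
        (∑ i ∈ Finset.univ.filter (fun i : Fin n => ⌊p⌋₊ ≤ (i : ℕ)), |t (σ i)| ^ 2)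
          ^ ((1 : ℝ) / 2) ≤ a) :
    ∑ i, ∫ ω, min ((t i * X i ω) ^ 2) (a ^ 2)
        ≤ p * a ^ 2 + ∑ i ∈ Finset.univ.filter (fun i : Fin n => ⌊p⌋₊ ≤ (i : ℕ)), |t (σ i)| ^ 2
      ∧ p * a ^ 2 + ∑ i ∈ Finset.univ.filter (fun i : Fin n => ⌊p⌋₊ ≤ (i : ℕ)), |t (σ i)| ^ 2
        ≤ 2 * p * a ^ 2 := by
  have hp0 : 0 < p := by linarith
  have htail := le_mul_sq_of_inv_sqrt_mul_rpow_half_le hp0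
    (Finset.sum_nonneg fun i _ => by positivity) haa
  refine ⟨?_, by linarith⟩
  calc ∑ i, ∫ ω, min ((t i * X i ω) ^ 2) (a ^ 2)
      ≤ ∑ i, min (t i ^ 2) (a ^ 2) := Finset.sum_le_sum fun i _ => by
        simpa [hvar i] using integral_min_mul_sq_le (h2 i) (t i) (sq_nonneg a)
    _ = ∑ i, min (|t (σ i)| ^ 2) (a ^ 2) := by
        simp only [sq_abs]; exact (Equiv.sum_comp σ fun i => min (t i ^ 2) (a ^ 2)).symm
    _ ≤ ⌊p⌋₊ • a ^ 2 + ∑ i ∈ Finset.univ.filter (fun i : Fin n => ⌊p⌋₊ ≤ (i : ℕ)), |t (σ i)| ^ 2 :=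
        Fin.sum_min_le_nsmul_add_sum_tail _ (sq_nonneg a) _
    _ ≤ p * a ^ 2 + ∑ i ∈ Finset.univ.filter (fun i : Fin n => ⌊p⌋₊ ≤ (i : ℕ)), |t (σ i)| ^ 2 := by
        rw [nsmul_eq_mul]; gcongr; exact Nat.floor_le hp0.le

/-- If `E X_i² = 1` and `a ≥ (1/√p)(∑_{i>p}(t_i*)²)^{1/2}`, then
`∑ E min{(t_iX_i)², a²} ≤ p a² + ∑_{i>p}(t_i*)² ≤ 2pa²`. -/
theorem stmt10 {Ω : Type*} [MeasureSpace Ω] [IsProbabilityMeasure (ℙ : Measure Ω)]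
    (n : ℕ) (X : Fin n → Ω → ℝ) (hX : ∀ i, Measurable (X i))
    (hindep : iIndepFun X)
    (h2 : ∀ i, Integrable (fun ω => X i ω ^ 2)) (hvar : ∀ i, ∫ ω, X i ω ^ 2 = 1)
    (t : Fin n → ℝ) (σ : Equiv.Perm (Fin n))
    (hσ : ∀ i j : Fin n, i ≤ j → |t (σ j)| ≤ |t (σ i)|)
    (p a : ℝ) (hp : 1 ≤ p) (ha : 0 < a)
    (haa : (1 / Real.sqrt p) *
        (∑ i ∈ Finset.univ.filter (fun i : Fin n => ⌊p⌋₊ ≤ (i : ℕ)), |t (σ i)| ^ 2)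
          ^ ((1 : ℝ) / 2) ≤ a) :
    ∑ i, ∫ ω, min ((t i * X i ω) ^ 2) (a ^ 2)
        ≤ p * a ^ 2 + ∑ i ∈ Finset.univ.filter (fun i : Fin n => ⌊p⌋₊ ≤ (i : ℕ)), |t (σ i)| ^ 2
      ∧ p * a ^ 2 + ∑ i ∈ Finset.univ.filter (fun i : Fin n => ⌊p⌋₊ ≤ (i : ℕ)), |t (σ i)| ^ 2
        ≤ 2 * p * a ^ 2 :=
  stmt10_general n X h2 hvar t σ p a hp haa
end

section
/- Let Y be a symmetric real random variable with finite moments such that ‖Y‖_q ≤ 2·(q/p)·‖Y‖_p for all q ≥ p ≥ 2r where r > 1. Then for all 2r ≥ q ≥ p ≥ 2, ‖Y‖_q ≤ (1/4)·(2^r)^4·‖Y‖_p, hence moments of Y grow regularly on [2, ∞). -/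
/-!
Monotonicity of moments gives `‖Y‖_q ≤ ‖Y‖_{2r}`. Hölder with exponents `p` and
`p' = p/(p-1)` gives `‖Y‖_{2r}^{2r} = E |Y| |Y|^{2r-1} ≤ ‖Y‖_p ‖Y‖_s^{2r-1}` for
`s = (2r-1) p' ∈ [2r, 4r]`, and the growth hypothesis between `2r` and `s` gives
`‖Y‖_s ≤ 4 ‖Y‖_{2r}`. Dividing by `‖Y‖_{2r}^{2r-1}` leaves
`‖Y‖_{2r} ≤ 4^{2r-1} ‖Y‖_p = (2^r)^4/4 · ‖Y‖_p`.
-/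

open MeasureTheory ProbabilityTheory

lemma Real.le_rpow_mul_of_rpow_add_one_le {x b c k : ℝ} (hx : 0 ≤ x) (hb : 0 ≤ b) (hc : 0 ≤ c)
    (h : x ^ (k + 1) ≤ b * (c * x) ^ k) : x ≤ c ^ k * b := by
  rcases hx.eq_or_lt with rfl | hx
  · positivity
  · rw [Real.rpow_add_one hx.ne', Real.mul_rpow hc hx.le] at h
    have := Real.rpow_pos_of_pos hx k
    nlinarith

lemma Real.le_sub_one_mul_conjExponent {m p : ℝ} (hp : 1 < p) (hpm : p ≤ m) :
    m ≤ (m - 1) * p.conjExponent := by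
  rw [Real.conjExponent, ← mul_div_assoc, le_div_iff₀ (by linarith)]
  nlinarith

lemma Real.mul_conjExponent_le {p k : ℝ} (hp : 2 ≤ p) (hk : 0 ≤ k) :
    k * p.conjExponent ≤ 2 * k := by
  rw [mul_comm 2]
  gcongr
  rw [Real.conjExponent, div_le_iff₀ (by linarith)]
  linarith

lemma four_rpow_two_mul_sub_one (r : ℝ) : (4 : ℝ) ^ (2 * r - 1) = 1 / 4 * ((2 : ℝ) ^ r) ^ 4 := by
  rw [show (4 : ℝ) = 2 ^ (2 : ℝ) by norm_num, ← Real.rpow_mul zero_le_two,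
    ← Real.rpow_natCast, ← Real.rpow_mul zero_le_two,
    show 2 * (2 * r - 1) = r * (4 : ℕ) - 2 by push_cast; ring, Real.rpow_sub two_pos]
  norm_num
  ring

section MomentNorm

variable {Ω : Type*} [MeasurableSpace Ω] {μ : Measure Ω} {f : Ω → ℝ} {t : ℝ}

/-- The paper's `‖f‖_t`. -/
noncomputable def momentNorm (μ : Measure Ω) (f : Ω → ℝ) (t : ℝ) : ℝ :=
  (∫ ω, |f ω| ^ t ∂μ) ^ (1 / t)

lemma integral_abs_rpow_nonneg : 0 ≤ ∫ ω, |f ω| ^ t ∂μ :=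
  integral_nonneg fun _ => Real.rpow_nonneg (abs_nonneg _) _

lemma momentNorm_nonneg : 0 ≤ momentNorm μ f t :=
  Real.rpow_nonneg integral_abs_rpow_nonneg _

lemma momentNorm_rpow (ht : t ≠ 0) : momentNorm μ f t ^ t = ∫ ω, |f ω| ^ t ∂μ := by
  rw [momentNorm, ← Real.rpow_mul integral_abs_rpow_nonneg, one_div_mul_cancel ht, Real.rpow_one]

lemma memLp_ofReal_of_integrable_abs_rpow (hf : AEStronglyMeasurable f μ) (ht : 0 < t)
    (hint : Integrable (fun ω => |f ω| ^ t) μ) : MemLp f (ENNReal.ofReal t) μ := by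
  have h0 : ENNReal.ofReal t ≠ 0 := by simpa using ht
  rw [← memLp_norm_rpow_iff hf h0 ENNReal.ofReal_ne_top, ENNReal.div_self h0 ENNReal.ofReal_ne_top,
    memLp_one_iff_integrable]
  simpa [Real.norm_eq_abs, ENNReal.toReal_ofReal ht.le] using hint

lemma MeasureTheory.MemLp.eLpNorm_ofReal_eq_momentNorm (hf : MemLp f (ENNReal.ofReal t) μ)
    (ht : 0 < t) :
    eLpNorm f (ENNReal.ofReal t) μ = ENNReal.ofReal (momentNorm μ f t) := by
  rw [hf.eLpNorm_eq_integral_rpow_norm (by simpa using ht) ENNReal.ofReal_ne_top,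
    ENNReal.toReal_ofReal ht.le, momentNorm, one_div]
  simp only [Real.norm_eq_abs]

lemma momentNorm_mono [IsProbabilityMeasure μ] {a b : ℝ} (ha : 0 < a) (hab : a ≤ b)
    (hf : MemLp f (ENNReal.ofReal b) μ) : momentNorm μ f a ≤ momentNorm μ f b := by
  have hab' : ENNReal.ofReal a ≤ ENNReal.ofReal b := ENNReal.ofReal_le_ofReal hab
  have h := eLpNorm_le_eLpNorm_of_exponent_le (μ := μ) hab' hf.aestronglyMeasurable
  rwa [(hf.mono_exponent hab').eLpNorm_ofReal_eq_momentNorm ha,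
    hf.eLpNorm_ofReal_eq_momentNorm (ha.trans_le hab),
    ENNReal.ofReal_le_ofReal_iff momentNorm_nonneg] at h

lemma integral_abs_rpow_one_add_le {p q k : ℝ} (hpq : p.HolderConjugate q) (hk : 0 < k)
    (hfp : MemLp f (ENNReal.ofReal p) μ) (hfkq : MemLp f (ENNReal.ofReal (k * q)) μ) :
    ∫ ω, |f ω| ^ (1 + k) ∂μ ≤ momentNorm μ f p * momentNorm μ f (k * q) ^ k := by
  have hg : MemLp (fun ω => |f ω| ^ k) (ENNReal.ofReal q) μ := by
    have h := hfkq.norm_rpow_div (ENNReal.ofReal k)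
    rwa [ENNReal.toReal_ofReal hk.le, ← ENNReal.ofReal_div_of_pos hk,
      mul_div_cancel_left₀ _ hk.ne'] at h
  have h := integral_mul_le_Lp_mul_Lq_of_nonneg hpq
    (Filter.Eventually.of_forall fun ω => abs_nonneg (f ω))
    (Filter.Eventually.of_forall fun ω => Real.rpow_nonneg (abs_nonneg (f ω)) k) hfp.abs hg
  have hsplit : ∀ ω, |f ω| ^ (1 + k) = |f ω| * |f ω| ^ k := fun ω => by
    rw [Real.rpow_add' (abs_nonneg _) (by linarith), Real.rpow_one]
  have hq : (∫ ω, (|f ω| ^ k) ^ q ∂μ) ^ (1 / q) = momentNorm μ f (k * q) ^ k := by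
    simp_rw [momentNorm, ← Real.rpow_mul (abs_nonneg _), ← Real.rpow_mul integral_abs_rpow_nonneg]
    congr 1
    field_simp [hk.ne', hpq.symm.ne_zero]
  simp_rw [hsplit]
  rwa [hq] at h

lemma momentNorm_le_of_momentNorm_conj_le {m p c : ℝ} (hm : 1 < m) (hp : 1 < p) (hc : 0 ≤ c)
    (hfp : MemLp f (ENNReal.ofReal p) μ)
    (hfs : MemLp f (ENNReal.ofReal ((m - 1) * p.conjExponent)) μ)
    (hgrowth : momentNorm μ f ((m - 1) * p.conjExponent) ≤ c * momentNorm μ f m) :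
    momentNorm μ f m ≤ c ^ (m - 1) * momentNorm μ f p := by
  refine Real.le_rpow_mul_of_rpow_add_one_le momentNorm_nonneg momentNorm_nonneg hc ?_
  calc momentNorm μ f m ^ (m - 1 + 1)
      = ∫ ω, |f ω| ^ (1 + (m - 1)) ∂μ := by
        rw [sub_add_cancel, add_sub_cancel, momentNorm_rpow (by linarith)]
    _ ≤ momentNorm μ f p * momentNorm μ f ((m - 1) * p.conjExponent) ^ (m - 1) :=
        integral_abs_rpow_one_add_le (.conjExponent hp) (by linarith) hfp hfs
    _ ≤ momentNorm μ f p * (c * momentNorm μ f m) ^ (m - 1) :=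
        mul_le_mul_of_nonneg_left (Real.rpow_le_rpow momentNorm_nonneg hgrowth (by linarith))
          momentNorm_nonneg

end MomentNorm

theorem stmt14_general {Ω : Type*} [MeasureSpace Ω] [IsProbabilityMeasure (ℙ : Measure Ω)]
    (Y : Ω → ℝ) (hY : Measurable Y)
    (hmom : ∀ p : ℝ, 1 ≤ p → Integrable (fun ω => |Y ω| ^ p))
    (r : ℝ)
    (hgrow : ∀ p q : ℝ, 2 * r ≤ p → p ≤ q →
      (∫ ω, |Y ω| ^ q) ^ (1 / q) ≤ 2 * (q / p) * (∫ ω, |Y ω| ^ p) ^ (1 / p)) :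
    ∀ p q : ℝ, 2 ≤ p → p ≤ q → q ≤ 2 * r →
      (∫ ω, |Y ω| ^ q) ^ (1 / q)
        ≤ (1 / 4) * ((2 : ℝ) ^ r) ^ (4 : ℕ) * (∫ ω, |Y ω| ^ p) ^ (1 / p) := by
  intro p q hp hpq hq
  show momentNorm ℙ Y q ≤ 1 / 4 * (2 ^ r) ^ 4 * momentNorm ℙ Y p
  have hmem : ∀ t, 1 ≤ t → MemLp Y (ENNReal.ofReal t) ℙ := fun t ht =>
    memLp_ofReal_of_integrable_abs_rpow hY.aestronglyMeasurable (by linarith) (hmom t ht)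
  set s := (2 * r - 1) * p.conjExponent
  have hs_ge : 2 * r ≤ s := Real.le_sub_one_mul_conjExponent (by linarith) (hpq.trans hq)
  have hs_le : s ≤ 2 * (2 * r - 1) := Real.mul_conjExponent_le hp (by linarith)
  have hgrowth : momentNorm ℙ Y s ≤ 4 * momentNorm ℙ Y (2 * r) := by
    refine (hgrow _ _ le_rfl hs_ge).trans (mul_le_mul_of_nonneg_right ?_ momentNorm_nonneg)
    rw [mul_div_assoc', div_le_iff₀ (by linarith)]
    linarith
  calc momentNorm ℙ Y q ≤ momentNorm ℙ Y (2 * r) :=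
        momentNorm_mono (by linarith) hq (hmem _ (by linarith))
    _ ≤ 4 ^ (2 * r - 1) * momentNorm ℙ Y p :=
        momentNorm_le_of_momentNorm_conj_le (by linarith) (by linarith) (by norm_num)
          (hmem p (by linarith)) (hmem s (by linarith)) hgrowth
    _ = _ := by rw [four_rpow_two_mul_sub_one]

/-- If `Y` is symmetric with `‖Y‖_q ≤ 2 (q/p) ‖Y‖_p` for all `q ≥ p ≥ 2r` (`r > 1`),
then `‖Y‖_q ≤ (1/4)(2^r)⁴ ‖Y‖_p` for all `2r ≥ q ≥ p ≥ 2`. -/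
theorem stmt14 {Ω : Type*} [MeasureSpace Ω] [IsProbabilityMeasure (ℙ : Measure Ω)]
    (Y : Ω → ℝ) (hY : Measurable Y)
    (hsymm : IdentDistrib Y (fun ω => -Y ω))
    (hmom : ∀ p : ℝ, 1 ≤ p → Integrable (fun ω => |Y ω| ^ p))
    (r : ℝ) (hr : 1 < r)
    (hgrow : ∀ p q : ℝ, 2 * r ≤ p → p ≤ q →
      (∫ ω, |Y ω| ^ q) ^ (1 / q) ≤ 2 * (q / p) * (∫ ω, |Y ω| ^ p) ^ (1 / p)) :
    ∀ p q : ℝ, 2 ≤ p → p ≤ q → q ≤ 2 * r →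
      (∫ ω, |Y ω| ^ q) ^ (1 / q)
        ≤ (1 / 4) * ((2 : ℝ) ^ r) ^ (4 : ℕ) * (∫ ω, |Y ω| ^ p) ^ (1 / p) :=
  stmt14_general Y hY hmom r hgrow
end
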